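/- Let p ≥ 2 be real and k ∈ ℝ. There exists a constant C > 0, depending only on p and k, such that for all vectors a, b ∈ ℝ² (Euclidean): ⟨(k² + ‖a‖²)^{(p−2)/2} a − (k² + ‖b‖²)^{(p−2)/2} b, a − b⟩ ≥ C‖a − b‖^p. -/

import Mathlib

open RealInnerProductSpace

/-- Strict monotonicity of the vector field `a ↦ (k² + ‖a‖²)^{(p-2)/2} a` on the
Euclidean plane, for real `p ≥ 2`: there is `C = C(p,k) > 0` with
`⟨(k²+‖a‖²)^{(p-2)/2} a − (k²+‖b‖²)^{(p-2)/2} b, a − b⟩ ≥ C ‖a − b‖^p`. -/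
theorem stmt_9 (p k : ℝ) (hp : 2 ≤ p) :
    ∃ C > 0, ∀ a b : EuclideanSpace ℝ (Fin 2),
      ⟪(k ^ 2 + ‖a‖ ^ 2) ^ ((p - 2) / 2) • a - (k ^ 2 + ‖b‖ ^ 2) ^ ((p - 2) / 2) • b,
        a - b⟫ ≥ C * ‖a - b‖ ^ p := by
  refine ⟨(2:ℝ) ^ (1 - p), Real.rpow_pos_of_pos two_pos _, fun a b => ?_⟩
  set s : ℝ := (p - 2) / 2 with hs_def
  have hs : 0 ≤ s := by unfold s; linarith
  set α : ℝ := (k ^ 2 + ‖a‖ ^ 2) ^ s with hα_def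
  set β : ℝ := (k ^ 2 + ‖b‖ ^ 2) ^ s with hβ_def
  by_cases hab : a = b
  · subst hab
    simp [Real.zero_rpow (by linarith : p ≠ 0)]
  have ht : 0 < ‖a - b‖ := by
    rw [norm_pos_iff]; exact sub_ne_zero_of_ne hab
  set t : ℝ := ‖a - b‖ with ht_def
  -- lower bounds for α, β
  have pow_lb : ∀ c : EuclideanSpace ℝ (Fin 2),
      ‖c‖ ^ (p - 2) ≤ (k ^ 2 + ‖c‖ ^ 2) ^ s := by
    intro c
    have h1 : ‖c‖ ^ (p - 2) = (‖c‖ ^ 2) ^ s := by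
      rw [← Real.rpow_natCast ‖c‖ 2, ← Real.rpow_mul (norm_nonneg c)]
      norm_num
      unfold s; ring_nf
    rw [h1]
    exact Real.rpow_le_rpow (by positivity) (by nlinarith [sq_nonneg k]) hs
  have hα0 : 0 ≤ α := Real.rpow_nonneg (by positivity) _
  have hβ0 : 0 ≤ β := Real.rpow_nonneg (by positivity) _
  -- inner product expansion
  have expand : ⟪α • a - β • b, a - b⟫ =
      α * ‖a‖ ^ 2 + β * ‖b‖ ^ 2 - (α + β) * ⟪a, b⟫ := by
    simp only [inner_sub_left, inner_sub_right, real_inner_smul_left,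
      real_inner_self_eq_norm_sq, real_inner_comm b a]
    ring
  have hns : t ^ 2 = ‖a‖ ^ 2 - 2 * ⟪a, b⟫ + ‖b‖ ^ 2 := by
    rw [ht_def]; exact norm_sub_sq_real a b
  -- monotone cross term
  have hmono : 0 ≤ (α - β) * (‖a‖ ^ 2 - ‖b‖ ^ 2) := by
    rcases le_total (‖a‖ ^ 2) (‖b‖ ^ 2) with h | h
    · have hαβ : α ≤ β :=
        Real.rpow_le_rpow (by positivity) (by linarith) hs
      nlinarith
    · have hβα : β ≤ α :=
        Real.rpow_le_rpow (by positivity) (by linarith) hs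
      exact mul_nonneg (by linarith) (by linarith)
  have hLB : (1/2) * (α + β) * t ^ 2 ≤ ⟪α • a - β • b, a - b⟫ := by
    rw [expand, hns]
    nlinarith [hmono]
  -- α + β ≥ (t/2)^(p-2)
  have hm : (t / 2) ^ (p - 2) ≤ α + β := by
    have htab : t ≤ ‖a‖ + ‖b‖ := norm_sub_le a b
    rcases le_total ‖a‖ ‖b‖ with h | h
    · have h2 : t / 2 ≤ ‖b‖ := by linarith
      have := Real.rpow_le_rpow (by positivity) h2 (by linarith : (0:ℝ) ≤ p - 2)
      have := pow_lb b
      linarith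
    · have h2 : t / 2 ≤ ‖a‖ := by linarith
      have := Real.rpow_le_rpow (by positivity) h2 (by linarith : (0:ℝ) ≤ p - 2)
      have := pow_lb a
      linarith
  -- arithmetic with the constant
  have ht2 : t ^ (p - 2) * t ^ 2 = t ^ p := by
    rw [← Real.rpow_natCast t 2, ← Real.rpow_add ht]
    norm_num
  have h2p : (0:ℝ) < (2:ℝ) ^ (p - 2) := Real.rpow_pos_of_pos two_pos _
  have e1 : (2:ℝ) ^ (1 - p) * (2:ℝ) ^ (p - 2) = 1 / 2 := by
    rw [← Real.rpow_add two_pos, show (1 - p) + (p - 2) = (-1 : ℝ) by ring,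
      Real.rpow_neg_one]
    norm_num
  have key : (2:ℝ) ^ (1 - p) * t ^ p = (1/2) * (t / 2) ^ (p - 2) * t ^ 2 := by
    rw [Real.div_rpow ht.le (by norm_num : (0:ℝ) ≤ 2), ← ht2]
    field_simp
    linear_combination 2 * e1
  have final : (2:ℝ) ^ (1 - p) * t ^ p ≤ ⟪α • a - β • b, a - b⟫ := by
    rw [key]
    calc (1/2) * (t / 2) ^ (p - 2) * t ^ 2 ≤ (1/2) * (α + β) * t ^ 2 := by
          gcongr
      _ ≤ _ := hLB
  exact final
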